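/- arXiv:1205.5603 — 3 statements merged into one kernel-verified Lean document; each statement's English description precedes it below -/
import Mathlib

section
/- Let L ≥ 3 be an integer and let μ be a real-valued function on the nonempty proper subsets of {1,…,L} such that μ({i}) ≥ 0 for every i and μ satisfies the ABCMI condition. Define r_i = Σ_𝒦 J_i(𝒦), the sum over all nonempty proper subsets 𝒦 of {1,…,L}. Then: (a) r_i ≥ 0 for every i; (b) for every subset 𝒮 ⊂ {1,…,L} with 1 ≤ |𝒮| ≤ L−2, Σ_{i∈𝒮} r_i ≥ Σ_{∅≠𝒦⊆𝒮} μ(𝒦); and (c) for every subset 𝒮 ⊂ {1,…,L} with |𝒮| = L−1, Σ_{i∈𝒮} r_i = Σ_{∅≠𝒦⊆𝒮} μ(𝒦). -/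
open Finset

/-- The contribution `J_i(𝒦)` from atom `a(𝒦)` to rate `r_i`. -/
noncomputable def J (L : ℕ) (μ : Finset (Fin L) → ℝ) (i : Fin L) (𝒦 : Finset (Fin L)) : ℝ :=
  if i ∈ 𝒦 then ((L : ℝ) - 𝒦.card) / ((L : ℝ) - 1) * μ 𝒦
  else -(((𝒦.card : ℝ) - 1) / ((L : ℝ) - 1)) * μ 𝒦

/-- The largest measure `μ̄_K` among atoms of weight `K`. -/
noncomputable def muMax (L : ℕ) (μ : Finset (Fin L) → ℝ) (K : ℕ) : ℝ :=
  sSup {x : ℝ | ∃ 𝒦 : Finset (Fin L), 𝒦.card = K ∧ μ 𝒦 = x}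

/-- The smallest measure `μ̲_K` among atoms of weight `K`. -/
noncomputable def muMin (L : ℕ) (μ : Finset (Fin L) → ℝ) (K : ℕ) : ℝ :=
  sInf {x : ℝ | ∃ 𝒦 : Finset (Fin L), 𝒦.card = K ∧ μ 𝒦 = x}

/-- `α(L,S,K) = S·C(L−1,K) − (S−K)·C(S,K)`. -/
def alphaC (L S K : ℕ) : ℤ :=
  (S : ℤ) * ((L - 1).choose K : ℤ) - ((S : ℤ) - (K : ℤ)) * (S.choose K : ℤ)

/-- `β(L,S,K) = S·C(L−1,K) − (L−1)·C(S,K)`. -/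
def betaC (L S K : ℕ) : ℤ :=
  (S : ℤ) * ((L - 1).choose K : ℤ) - ((L : ℤ) - 1) * (S.choose K : ℤ)

/-- The almost balanced conditional mutual information (ABCMI) condition. -/
noncomputable def ABCMI (L : ℕ) (μ : Finset (Fin L) → ℝ) : Prop :=
  muMax L μ (L - 1) ≤ muMin L μ (L - 1) * (1 + 1 / ((L : ℝ) - 2)) ∧
  ∀ K : ℕ, 2 ≤ K → K ≤ L - 2 →
    muMax L μ K ≤ muMin L μ K * (1 + (1 / ((K : ℝ) - 1)) *
      sInf {x : ℝ | ∃ S : ℕ, K ≤ S ∧ S ≤ L - 2 ∧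
        x = (betaC L S K : ℝ) / (alphaC L S K : ℝ)})

/-- The rate `r_i`, a sum of contributions over all nonempty proper subsets of `{1,…,L}`. -/
noncomputable def r (L : ℕ) (μ : Finset (Fin L) → ℝ) (i : Fin L) : ℝ :=
  ∑ 𝒦 ∈ Finset.univ.filter
      (fun 𝒦 : Finset (Fin L) => 𝒦 ≠ ∅ ∧ 𝒦 ≠ Finset.univ), J L μ i 𝒦

/-!
Multiplied by `L - 1`, the slack `∑_{i ∈ 𝒮} r_i - ∑_{∅ ≠ 𝒦 ⊆ 𝒮} μ(𝒦)` is `∑_𝒦 c(𝒦) μ(𝒦)` with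
`c(𝒦) = (L - 1)|𝒮 ∩ 𝒦| - |𝒮|(|𝒦| - 1) - (L - 1)[𝒦 ⊆ 𝒮]`. All these coefficients vanish when
`|𝒮| = L - 1`, and those of singletons always vanish. On a weight class `|𝒦| = k ≥ 2` the
coefficients sum to `β(L, |𝒮|, k)`, and their negative parts are dominated by nonnegative weights
summing to `(k - 1) α(L, |𝒮|, k)`; hence the class contributes at least
`μ̲_k β - (μ̄_k - μ̲_k)(k - 1) α`, which the ABCMI condition makes nonnegative.
Part (a) is part (b) for `𝒮 = {i}`.
-/

lemma Nat.choose_lt_choose_of_lt {r a b : ℕ} (hr : 1 ≤ r) (hra : r ≤ a + 1) (hab : a < b) :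
    a.choose r < b.choose r := by
  obtain ⟨j, rfl⟩ := Nat.exists_eq_add_of_le' hr
  calc a.choose (j + 1) < (a + 1).choose (j + 1) := by
        rw [Nat.choose_succ_succ']; have := Nat.choose_pos (show j ≤ a by omega); omega
    _ ≤ b.choose (j + 1) := Nat.choose_le_choose _ hab

lemma alphaC_nonneg {L S : ℕ} (K : ℕ) (hS : S ≤ L - 1) : 0 ≤ alphaC L S K := by
  have hc : (S.choose K : ℤ) ≤ (L - 1).choose K := by exact_mod_cast Nat.choose_le_choose K hS
  unfold alphaC
  nlinarith [(S.choose K).cast_nonneg (α := ℤ), K.cast_nonneg (α := ℤ), S.cast_nonneg (α := ℤ)]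

lemma alphaC_pos {L S K : ℕ} (hK : 1 ≤ K) (hKS : K ≤ S) (hS : S ≤ L - 1) : 0 < alphaC L S K := by
  have hc : (S.choose K : ℤ) ≤ (L - 1).choose K := by exact_mod_cast Nat.choose_le_choose K hS
  have hc1 : (1 : ℤ) ≤ S.choose K := by exact_mod_cast Nat.choose_pos hKS
  have hK' : (1 : ℤ) ≤ K := by exact_mod_cast hK
  unfold alphaC
  nlinarith [S.cast_nonneg (α := ℤ)]

/-- Multiplying by `K` turns `β > 0` into `C(S-1, K-1) < C(L-2, K-1)`. -/
lemma betaC_pos {L S K : ℕ} (hK : 2 ≤ K) (hKS : K ≤ S) (hS : S ≤ L - 2) : 0 < betaC L S K := by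
  obtain ⟨s, rfl⟩ := Nat.exists_eq_add_of_le' (show 1 ≤ S by omega)
  obtain ⟨k, rfl⟩ := Nat.exists_eq_add_of_le' (show 1 ≤ K by omega)
  obtain ⟨l, hl⟩ := Nat.exists_eq_add_of_le' (show 1 ≤ L - 1 by omega)
  have hS' := Nat.add_one_mul_choose_eq s k
  have hL' := Nat.add_one_mul_choose_eq l k
  have hlt := Nat.choose_lt_choose_of_lt (a := s) (b := l) (r := k) (by omega) (by omega) (by omega)
  have key : (l + 1) * (s + 1).choose (k + 1) < (s + 1) * (l + 1).choose (k + 1) := by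
    refine Nat.lt_of_mul_lt_mul_right (a := k + 1) ?_
    calc (l + 1) * (s + 1).choose (k + 1) * (k + 1) = (l + 1) * (s + 1) * s.choose k := by
          rw [mul_assoc, ← hS']; ring
      _ < (l + 1) * (s + 1) * l.choose k := Nat.mul_lt_mul_of_pos_left hlt (by positivity)
      _ = (s + 1) * ((l + 1) * l.choose k) := by ring
      _ = (s + 1) * (l + 1).choose (k + 1) * (k + 1) := by rw [hL']; ring
  have hLz : (L : ℤ) - 1 = l + 1 := by omega
  unfold betaC
  rw [hl, hLz]
  have key' := (Nat.cast_lt (α := ℤ)).2 key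
  push_cast at key' ⊢
  linarith

section Extrema

variable {L : ℕ} (μ : Finset (Fin L) → ℝ) {K : ℕ} {𝒦 : Finset (Fin L)}

lemma finite_setOf_card_eq_apply (K : ℕ) :
    {x : ℝ | ∃ 𝒦 : Finset (Fin L), 𝒦.card = K ∧ μ 𝒦 = x}.Finite :=
  (Set.finite_range μ).subset fun _ ⟨𝒦, _, h⟩ ↦ ⟨𝒦, h⟩

lemma muMin_le (h : 𝒦.card = K) : muMin L μ K ≤ μ 𝒦 :=
  csInf_le (finite_setOf_card_eq_apply μ K).bddBelow ⟨𝒦, h, rfl⟩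

lemma le_muMax (h : 𝒦.card = K) : μ 𝒦 ≤ muMax L μ K :=
  le_csSup (finite_setOf_card_eq_apply μ K).bddAbove ⟨𝒦, h, rfl⟩

lemma muMin_le_muMax (hK : K ≤ L) : muMin L μ K ≤ muMax L μ K := by
  obtain ⟨𝒦, -, h𝒦⟩ := exists_subset_card_eq (s := (univ : Finset (Fin L))) (by simpa using hK)
  exact (muMin_le μ h𝒦).trans (le_muMax μ h𝒦)

end Extrema

/-- The minimum over `S` of `β(L,S,K) / α(L,S,K)` in the ABCMI condition. -/
noncomputable def abcmiRatio (L K : ℕ) : ℝ :=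
  sInf {x : ℝ | ∃ S : ℕ, K ≤ S ∧ S ≤ L - 2 ∧ x = (betaC L S K : ℝ) / (alphaC L S K : ℝ)}

section Ratio

variable {L K : ℕ}

lemma abcmiRatio_eq_sInf_image :
    abcmiRatio L K =
      sInf ((fun S ↦ (betaC L S K : ℝ) / (alphaC L S K : ℝ)) '' Set.Icc K (L - 2)) := by
  unfold abcmiRatio
  congr 1
  ext x
  simp [and_assoc, eq_comm]

lemma abcmiRatio_le {S : ℕ} (hKS : K ≤ S) (hS : S ≤ L - 2) :
    abcmiRatio L K ≤ (betaC L S K : ℝ) / (alphaC L S K : ℝ) := by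
  rw [abcmiRatio_eq_sInf_image]
  exact csInf_le ((Set.finite_Icc _ _).image _).bddBelow ⟨S, ⟨hKS, hS⟩, rfl⟩

lemma abcmiRatio_pos (hK : 2 ≤ K) (hKL : K ≤ L - 2) : 0 < abcmiRatio L K := by
  rw [abcmiRatio_eq_sInf_image]
  obtain ⟨S, ⟨hKS, hS⟩, hmin⟩ := Set.Nonempty.csInf_mem
    ((Set.nonempty_Icc.2 hKL).image fun S ↦ (betaC L S K : ℝ) / (alphaC L S K : ℝ))
    ((Set.finite_Icc _ _).image _)
  rw [← hmin]
  exact div_pos (mod_cast betaC_pos hK hKS hS) (mod_cast alphaC_pos (by omega) hKS (by omega))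

/-- For `S < K` we have `α = β ≥ 0`, and the ratio at `S = K` is at most `1`. -/
lemma abcmiRatio_mul_alphaC_le {S : ℕ} (hK : 2 ≤ K) (hKL : K ≤ L - 2) (hS : S ≤ L - 2) :
    abcmiRatio L K * alphaC L S K ≤ betaC L S K := by
  rcases le_or_gt K S with hKS | hSK
  · rw [← le_div_iff₀ (mod_cast alphaC_pos (by omega) hKS (by omega))]
    exact abcmiRatio_le hKS hS
  · have hαβ : alphaC L S K = betaC L S K := by
      simp [alphaC, betaC, Nat.choose_eq_zero_of_lt hSK]
    have hαKK := alphaC_pos (L := L) (by omega) le_rfl (show K ≤ L - 1 by omega)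
    have hβαKK : betaC L K K ≤ alphaC L K K := by
      simp only [alphaC, betaC, Nat.choose_self]; push_cast; omega
    have hle1 : abcmiRatio L K ≤ 1 :=
      (abcmiRatio_le le_rfl hKL).trans ((div_le_one (mod_cast hαKK)).2 (mod_cast hβαKK))
    rw [← hαβ]
    exact mul_le_of_le_one_left (mod_cast alphaC_nonneg K (by omega)) hle1

end Ratio

lemma ABCMI.exists_spread_le {L : ℕ} {μ : Finset (Fin L) → ℝ} (h : ABCMI L μ) (hL : 3 ≤ L)
    {k : ℕ} (hk : 2 ≤ k) (hkL : k ≤ L - 1) :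
    ∃ t : ℝ, 0 < t ∧ ((k : ℝ) - 1) * (muMax L μ k - muMin L μ k) ≤ muMin L μ k * t ∧
      ∀ S ≤ L - 2, t * alphaC L S k ≤ betaC L S k := by
  rcases hkL.eq_or_lt with rfl | hkL
  · refine ⟨1, one_pos, ?_, fun S hS ↦ ?_⟩
    · have hL2 : (0 : ℝ) < L - 2 := by
        have : (3 : ℝ) ≤ L := mod_cast hL
        linarith
      have h1 := h.1
      rw [Nat.cast_sub (by omega), Nat.cast_one, sub_sub, one_add_one_eq_two]
      rw [mul_one_add, ← sub_le_iff_le_add', mul_one_div, le_div_iff₀ hL2] at h1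
      linarith
    · simp [alphaC, betaC, Nat.choose_eq_zero_of_lt (show S < L - 1 by omega)]
  · refine ⟨abcmiRatio L k, abcmiRatio_pos hk (by omega), ?_,
      fun S hS ↦ abcmiRatio_mul_alphaC_le hk (by omega) hS⟩
    have hk1 : (0 : ℝ) < k - 1 := by
      have : (2 : ℝ) ≤ k := mod_cast hk
      linarith
    have h2 : muMax L μ k ≤ muMin L μ k * (1 + 1 / ((k : ℝ) - 1) * abcmiRatio L k) :=
      h.2 k hk (by omega)
    rw [mul_one_add, ← sub_le_iff_le_add', one_div_mul_eq_div, mul_div_assoc',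
      le_div_iff₀ hk1] at h2
    linarith

lemma le_sum_mul_of_forall_mem_Icc {ι : Type*} (s : Finset ι) {d e x : ι → ℝ} {P Q : ℝ}
    (he : ∀ i ∈ s, 0 ≤ e i) (hde : ∀ i ∈ s, 0 ≤ d i + e i) (hx : ∀ i ∈ s, x i ∈ Set.Icc P Q) :
    P * ∑ i ∈ s, d i - (Q - P) * ∑ i ∈ s, e i ≤ ∑ i ∈ s, d i * x i := by
  rw [mul_sum, mul_sum, ← sum_sub_distrib]
  refine sum_le_sum fun i hi ↦ ?_
  obtain ⟨hPx, hxQ⟩ := hx i hi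
  nlinarith [mul_nonneg (hde i hi) (sub_nonneg.2 hPx), mul_nonneg (he i hi) (sub_nonneg.2 hxQ)]

lemma card_powersetCard_univ_succ {α : Type*} [Fintype α] {N : ℕ} (hN : Fintype.card α = N + 1)
    (j : ℕ) :
    #(powersetCard (j + 1) (univ : Finset α)) = N.choose j + N.choose (j + 1) := by
  rw [card_powersetCard, card_univ, hN, Nat.choose_succ_succ']

section Slack

variable {α : Type*} [DecidableEq α]

noncomputable def slackDeficit (S K : Finset α) : ℝ :=
  if K ⊆ S then 0 else ((#K : ℝ) - 1) * #(S \ K)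

lemma slackDeficit_nonneg (S K : Finset α) : 0 ≤ slackDeficit S K := by
  unfold slackDeficit
  split_ifs with hKS
  · exact le_rfl
  · have : (1 : ℝ) ≤ #K := by
      exact_mod_cast card_pos.2 (nonempty_of_ne_empty (by rintro rfl; exact hKS (empty_subset S)))
    exact mul_nonneg (by linarith) (Nat.cast_nonneg _)

variable [Fintype α]

/-- `(L - 1)` times the coefficient of `μ 𝒦` in `∑_{i ∈ 𝒮} r_i - ∑_{∅ ≠ 𝒦 ⊆ 𝒮} μ 𝒦`. -/
noncomputable def slackCoeff (S K : Finset α) : ℝ :=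
  ((Fintype.card α : ℝ) - 1) * #(S ∩ K) - #S * ((#K : ℝ) - 1) -
    if K ⊆ S then (Fintype.card α : ℝ) - 1 else 0

lemma slackCoeff_singleton (S : Finset α) (a : α) : slackCoeff S {a} = 0 := by
  by_cases ha : a ∈ S <;> simp [slackCoeff, ha]

lemma slackCoeff_eq_zero_of_card_add_one {S : Finset α} (hS : #S + 1 = Fintype.card α)
    (K : Finset α) : slackCoeff S K = 0 := by
  have hn : (Fintype.card α : ℝ) - 1 = #S := by rw [← hS]; push_cast; ring
  by_cases hKS : K ⊆ S
  · simp [slackCoeff, hKS, inter_eq_right.2 hKS, hn]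
    ring
  · have hout : #(K \ S) = 1 := by
      have hle : #(K \ S) ≤ #Sᶜ := card_le_card fun x hx ↦ by simp_all
      have hpos : 0 < #(K \ S) := card_pos.2 (sdiff_nonempty.2 hKS)
      rw [card_compl] at hle
      omega
    have hK : #(S ∩ K) + 1 = #K := by
      rw [← hout, inter_comm, card_inter_add_card_sdiff]
    simp only [slackCoeff, hKS, if_false, hn, ← hK]
    push_cast
    ring

lemma slackCoeff_add_slackDeficit_nonneg {S K : Finset α} (hS : #S < Fintype.card α)
    (hK : K.Nonempty) : 0 ≤ slackCoeff S K + slackDeficit S K := by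
  have hS' : (#S : ℝ) + 1 ≤ Fintype.card α := mod_cast hS
  have hK' : (1 : ℝ) ≤ #K := mod_cast card_pos.2 hK
  unfold slackCoeff slackDeficit
  split_ifs with hKS
  · rw [inter_eq_right.2 hKS]
    nlinarith
  · have hsplit : (#(S ∩ K) : ℝ) + #(S \ K) = #S := mod_cast card_inter_add_card_sdiff S K
    have hKn : (#K : ℝ) ≤ Fintype.card α := mod_cast card_le_univ K
    nlinarith [(#(S ∩ K)).cast_nonneg (α := ℝ)]

lemma sum_card_inter_powersetCard_succ (S : Finset α) {N : ℕ} (hN : Fintype.card α = N + 1)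
    (j : ℕ) : ∑ K ∈ powersetCard (j + 1) univ, #(S ∩ K) = #S * N.choose j := by
  refine sum_card_inter fun a _ ↦ ?_
  simpa [hN] using card_filter_powersetCard_subset {a} (univ : Finset α) (j + 1) (subset_univ _)

lemma card_filter_subset_powersetCard_univ (S : Finset α) (k : ℕ) :
    #{K ∈ powersetCard k (univ : Finset α) | K ⊆ S} = (#S).choose k := by
  rw [← card_powersetCard]
  congr 1
  ext K
  simp [and_comm]

end Slack

section WeightClass

variable {α : Type*} [Fintype α] [DecidableEq α] [Nonempty α]

lemma sum_slackCoeff_powersetCard (S : Finset α) {k : ℕ} (hk : 1 ≤ k) :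
    ∑ K ∈ powersetCard k univ, slackCoeff S K = betaC (Fintype.card α) #S k := by
  obtain ⟨N, hN⟩ := Nat.exists_eq_add_one.2 (Fintype.card_pos (α := α))
  obtain ⟨j, rfl⟩ := Nat.exists_eq_add_of_le' hk
  have hid : ((N : ℝ) + 1) * N.choose j = (N.choose j + N.choose (j + 1)) * (j + 1) := by
    have := Nat.add_one_mul_choose_eq N j
    rw [Nat.choose_succ_succ'] at this
    exact_mod_cast this
  calc ∑ K ∈ powersetCard (j + 1) univ, slackCoeff S K
      = ∑ K ∈ powersetCard (j + 1) univ,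
          ((N : ℝ) * #(S ∩ K) - #S * j - if K ⊆ S then (N : ℝ) else 0) := by
        refine sum_congr rfl fun K hK ↦ ?_
        rw [mem_powersetCard_univ] at hK
        simp [slackCoeff, hK, hN]
    _ = N * (#S * N.choose j) - (N.choose j + N.choose (j + 1)) * (#S * j) -
          (#S).choose (j + 1) * N := by
        rw [sum_sub_distrib, sum_sub_distrib, ← mul_sum, ← Nat.cast_sum,
          sum_card_inter_powersetCard_succ S hN, sum_const, nsmul_eq_mul,
          card_powersetCard_univ_succ hN, ← sum_filter, sum_const, nsmul_eq_mul,
          card_filter_subset_powersetCard_univ]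
        push_cast
        ring
    _ = betaC (Fintype.card α) #S (j + 1) := by
        simp only [betaC, hN, Nat.add_sub_cancel]
        push_cast
        linear_combination (#S : ℝ) * hid

lemma sum_slackDeficit_powersetCard (S : Finset α) {k : ℕ} (hk : 1 ≤ k) :
    ∑ K ∈ powersetCard k univ, slackDeficit S K =
      ((k : ℝ) - 1) * alphaC (Fintype.card α) #S k := by
  obtain ⟨N, hN⟩ := Nat.exists_eq_add_one.2 (Fintype.card_pos (α := α))
  obtain ⟨j, rfl⟩ := Nat.exists_eq_add_of_le' hk
  have hsdiff (K : Finset α) : (#(S \ K) : ℝ) = #S - #(S ∩ K) := by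
    rw [eq_sub_iff_add_eq', ← Nat.cast_add, card_inter_add_card_sdiff]
  calc ∑ K ∈ powersetCard (j + 1) univ, slackDeficit S K
      = ∑ K ∈ powersetCard (j + 1) univ, ((j : ℝ) * (#S - #(S ∩ K)) -
          if K ⊆ S then (j : ℝ) * (#S - (j + 1)) else 0) := by
        refine sum_congr rfl fun K hK ↦ ?_
        rw [mem_powersetCard_univ] at hK
        by_cases hKS : K ⊆ S
        · simp [slackDeficit, hKS, inter_eq_right.2 hKS, hK]
        · simp [slackDeficit, hKS, hK, hsdiff]
    _ = j * ((N.choose j + N.choose (j + 1)) * #S - #S * N.choose j) -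
          (#S).choose (j + 1) * (j * (#S - (j + 1))) := by
        rw [sum_sub_distrib, ← mul_sum, sum_sub_distrib, sum_const, nsmul_eq_mul,
          card_powersetCard_univ_succ hN, ← Nat.cast_sum, sum_card_inter_powersetCard_succ S hN,
          ← sum_filter, sum_const, nsmul_eq_mul, card_filter_subset_powersetCard_univ]
        push_cast
        ring
    _ = ((j + 1 : ℕ) - 1 : ℝ) * alphaC (Fintype.card α) #S (j + 1) := by
        simp only [alphaC, hN, Nat.add_sub_cancel]
        push_cast
        ring

lemma le_sum_slackCoeff_mul {S : Finset α} (hS : #S < Fintype.card α) {k : ℕ} (hk : 1 ≤ k)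
    {P Q : ℝ} {x : Finset α → ℝ} (hx : ∀ K ∈ powersetCard k univ, x K ∈ Set.Icc P Q) :
    P * betaC (Fintype.card α) #S k - (Q - P) * (((k : ℝ) - 1) * alphaC (Fintype.card α) #S k) ≤
      ∑ K ∈ powersetCard k univ, slackCoeff S K * x K := by
  rw [← sum_slackCoeff_powersetCard S hk, ← sum_slackDeficit_powersetCard S hk]
  refine le_sum_mul_of_forall_mem_Icc _ (fun K _ ↦ slackDeficit_nonneg S K) (fun K hK ↦ ?_) hx
  refine slackCoeff_add_slackDeficit_nonneg hS (card_pos.1 ?_)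
  rw [mem_powersetCard_univ.1 hK]
  exact hk

end WeightClass

lemma sum_filter_ne_empty_ne_univ {α M : Type*} [Fintype α] [DecidableEq α] [AddCommMonoid M]
    (f : Finset α → M) :
    ∑ K ∈ univ.filter (fun K : Finset α ↦ K ≠ ∅ ∧ K ≠ univ), f K =
      ∑ k ∈ Icc 1 (Fintype.card α - 1), ∑ K ∈ powersetCard k univ, f K := by
  have hcard (K : Finset α) : K ≠ ∅ ∧ K ≠ univ ↔ #K ∈ Icc 1 (Fintype.card α - 1) := by
    have := card_le_univ K
    rw [ne_eq, ← card_eq_zero, ne_eq, ← card_eq_iff_eq_univ, mem_Icc]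
    omega
  rw [← sum_fiberwise_of_maps_to (g := card) fun K hK ↦ (hcard K).1 (mem_filter.1 hK).2]
  refine sum_congr rfl fun k hk ↦ sum_congr ?_ fun _ _ ↦ rfl
  ext K
  simp only [mem_filter, mem_univ, true_and, mem_powersetCard_univ]
  constructor
  · exact And.right
  · rintro rfl; exact ⟨(hcard K).2 hk, rfl⟩

section Rates

variable {L : ℕ} (μ : Finset (Fin L) → ℝ)

lemma sub_one_mul_sum_J (hL : 1 < L) (S K : Finset (Fin L)) :
    ((L : ℝ) - 1) * ∑ i ∈ S, J L μ i K =
      (((L : ℝ) - 1) * #(S ∩ K) - #S * ((#K : ℝ) - 1)) * μ K := by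
  have hL1 : (L : ℝ) - 1 ≠ 0 := by
    have : (1 : ℝ) < L := mod_cast hL
    linarith
  have hsdiff : (#(S \ K) : ℝ) = #S - #(S ∩ K) := by
    rw [eq_sub_iff_add_eq', ← Nat.cast_add, card_inter_add_card_sdiff]
  simp only [J]
  rw [sum_ite, sum_const, sum_const, filter_mem_eq_inter, filter_notMem_eq_sdiff, nsmul_eq_mul,
    nsmul_eq_mul, hsdiff]
  field_simp
  ring

lemma sub_one_mul_sum_r_sub_sum_powerset (hL : 1 < L) {S : Finset (Fin L)} (hS : S ≠ univ) :
    ((L : ℝ) - 1) * (∑ i ∈ S, r L μ i - ∑ K ∈ S.powerset.filter (fun K ↦ K ≠ ∅), μ K) =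
      ∑ K ∈ univ.filter (fun K : Finset (Fin L) ↦ K ≠ ∅ ∧ K ≠ univ), slackCoeff S K * μ K := by
  have hpowerset : S.powerset.filter (fun K ↦ K ≠ ∅) =
      (univ.filter fun K : Finset (Fin L) ↦ K ≠ ∅ ∧ K ≠ univ).filter (· ⊆ S) := by
    ext K
    simp only [mem_filter, mem_powerset, mem_univ, true_and]
    constructor
    · rintro ⟨hKS, hK⟩
      exact ⟨⟨hK, fun h ↦ hS (univ_subset_iff.1 (h ▸ hKS))⟩, hKS⟩
    · rintro ⟨⟨hK, -⟩, hKS⟩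
      exact ⟨hKS, hK⟩
  simp only [r]
  rw [hpowerset, sum_filter, sum_comm, mul_sub, mul_sum, mul_sum, ← sum_sub_distrib]
  refine sum_congr rfl fun K _ ↦ ?_
  rw [sub_one_mul_sum_J μ hL, slackCoeff, Fintype.card_fin]
  split_ifs <;> ring

lemma sum_r_eq_sum_powerset (hL : 1 < L) {S : Finset (Fin L)} (hS : #S = L - 1) :
    ∑ i ∈ S, r L μ i = ∑ K ∈ S.powerset.filter (fun K ↦ K ≠ ∅), μ K := by
  have hSne : S ≠ univ := by
    rintro rfl
    rw [card_univ, Fintype.card_fin] at hS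
    omega
  have h := sub_one_mul_sum_r_sub_sum_powerset μ hL hSne
  have hzero : ∑ K ∈ univ.filter (fun K : Finset (Fin L) ↦ K ≠ ∅ ∧ K ≠ univ),
      slackCoeff S K * μ K = 0 := sum_eq_zero fun K _ ↦ by
    rw [slackCoeff_eq_zero_of_card_add_one (by rw [Fintype.card_fin]; omega), zero_mul]
  rw [hzero] at h
  have hL1 : (L : ℝ) - 1 ≠ 0 := by
    have : (1 : ℝ) < L := mod_cast hL
    linarith
  exact sub_eq_zero.1 ((mul_eq_zero.1 h).resolve_left hL1)

variable {μ}

lemma ABCMI.sum_slackCoeff_mul_nonneg (h : ABCMI L μ) (hL : 3 ≤ L) {S : Finset (Fin L)}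
    (hS : #S ≤ L - 2) {k : ℕ} (hk1 : 1 ≤ k) (hk : k ≤ L - 1) :
    0 ≤ ∑ K ∈ powersetCard k univ, slackCoeff S K * μ K := by
  rcases hk1.eq_or_lt with rfl | hk2
  · refine (sum_eq_zero fun K hK ↦ ?_).ge
    obtain ⟨a, rfl⟩ := card_eq_one.1 (mem_powersetCard_univ.1 hK)
    rw [slackCoeff_singleton, zero_mul]
  have : Nonempty (Fin L) := ⟨⟨0, by omega⟩⟩
  obtain ⟨t, ht, hspread, htαβ⟩ := h.exists_spread_le hL hk2 hk
  have hPQ : muMin L μ k ≤ muMax L μ k := muMin_le_muMax μ (by omega)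
  have hk1' : (1 : ℝ) ≤ k := mod_cast hk1
  have hP : 0 ≤ muMin L μ k := by
    have : 0 ≤ muMin L μ k * t := le_trans (by nlinarith) hspread
    exact nonneg_of_mul_nonneg_left this ht
  have hα : (0 : ℝ) ≤ alphaC L #S k := mod_cast alphaC_nonneg k (by omega)
  have hbound := le_sum_slackCoeff_mul (S := S) (by rw [Fintype.card_fin]; omega) hk1 (x := μ)
    fun K hK ↦ ⟨muMin_le μ (mem_powersetCard_univ.1 hK), le_muMax μ (mem_powersetCard_univ.1 hK)⟩
  rw [Fintype.card_fin] at hbound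
  refine le_trans ?_ hbound
  nlinarith [mul_le_mul_of_nonneg_right hspread hα, mul_le_mul_of_nonneg_left (htαβ #S hS) hP]

lemma ABCMI.sum_powerset_le_sum_r (h : ABCMI L μ) (hL : 3 ≤ L) {S : Finset (Fin L)}
    (hS : #S ≤ L - 2) :
    ∑ K ∈ S.powerset.filter (fun K ↦ K ≠ ∅), μ K ≤ ∑ i ∈ S, r L μ i := by
  have hSne : S ≠ univ := by
    rintro rfl
    rw [card_univ, Fintype.card_fin] at hS
    omega
  have hslack := sub_one_mul_sum_r_sub_sum_powerset μ (by omega) hSne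
  rw [sum_filter_ne_empty_ne_univ, Fintype.card_fin] at hslack
  have hnonneg :
      0 ≤ ((L : ℝ) - 1) * (∑ i ∈ S, r L μ i - ∑ K ∈ S.powerset.filter (· ≠ ∅), μ K) :=
    hslack ▸ sum_nonneg fun k hk ↦
      h.sum_slackCoeff_mul_nonneg hL hS (mem_Icc.1 hk).1 (mem_Icc.1 hk).2
  have hL1 : (0 : ℝ) < L - 1 := by
    have : (3 : ℝ) ≤ L := mod_cast hL
    linarith
  exact sub_nonneg.1 (nonneg_of_mul_nonneg_right hnonneg hL1)

end Rates

theorem stmt0 (L : ℕ) (hL : 3 ≤ L) (μ : Finset (Fin L) → ℝ)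
    (hsingle : ∀ i : Fin L, 0 ≤ μ {i}) (habcmi : ABCMI L μ) :
    (∀ i : Fin L, 0 ≤ r L μ i) ∧
    (∀ 𝒮 : Finset (Fin L), 1 ≤ 𝒮.card → 𝒮.card ≤ L - 2 →
      ∑ 𝒦 ∈ 𝒮.powerset.filter (fun 𝒦 => 𝒦 ≠ ∅), μ 𝒦 ≤ ∑ i ∈ 𝒮, r L μ i) ∧
    (∀ 𝒮 : Finset (Fin L), 𝒮.card = L - 1 →
      ∑ i ∈ 𝒮, r L μ i = ∑ 𝒦 ∈ 𝒮.powerset.filter (fun 𝒦 => 𝒦 ≠ ∅), μ 𝒦) := by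
  refine ⟨fun i ↦ ?_, fun 𝒮 _ h𝒮 ↦ habcmi.sum_powerset_le_sum_r hL h𝒮,
    fun 𝒮 h𝒮 ↦ sum_r_eq_sum_powerset μ (by omega) h𝒮⟩
  have h := habcmi.sum_powerset_le_sum_r hL (S := {i}) (by rw [card_singleton]; omega)
  have hpowerset : ({i} : Finset (Fin L)).powerset.filter (fun K ↦ K ≠ ∅) = {{i}} := by
    rw [← insert_empty_eq i, powerset_insert]
    simp [filter_insert]
  rw [hpowerset, sum_singleton, sum_singleton] at h
  exact (hsingle i).trans h
end

section
/- For all integers L, S, K with 2 ≤ K ≤ S ≤ L−2: α(L,S,K) ≥ β(L,S,K) ≥ 0, and moreover α(L,S,K) > 0. -/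
lemma key_choose (n m k : ℕ) (hk : 1 ≤ k) (hkm : k ≤ m) (hmn : m ≤ n) :
    n * m.choose k ≤ m * n.choose k := by
  obtain ⟨k, rfl⟩ := Nat.exists_eq_add_of_le hk
  obtain ⟨m, rfl⟩ := Nat.exists_eq_add_of_le (le_trans (Nat.le_add_right 1 k) hkm)
  obtain ⟨n, rfl⟩ := Nat.exists_eq_add_of_le (le_trans (Nat.le_add_right 1 m) hmn)
  have h1 : (m + 1).choose (k + 1) * (k + 1) = (m + 1) * m.choose k := by
    rw [← Nat.add_one_mul_choose_eq]
  have h2 : (n + 1).choose (k + 1) * (k + 1) = (n + 1) * n.choose k := by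
    rw [← Nat.add_one_mul_choose_eq]
  have hc : m.choose k ≤ n.choose k := Nat.choose_le_choose k (by omega)
  have := Nat.mul_le_mul (Nat.mul_le_mul_left (n + 1) hc) (le_refl (k + 1))
  apply Nat.le_of_mul_le_mul_right _ (Nat.succ_pos k)
  calc (1 + n) * (1 + m).choose (1 + k) * (k + 1)
      = (n + 1) * ((m + 1).choose (k + 1) * (k + 1)) := by ring_nf
    _ = (n + 1) * ((m + 1) * m.choose k) := by rw [h1]
    _ ≤ (m + 1) * ((n + 1) * n.choose k) := by nlinarith [hc]
    _ = (1 + m) * (1 + n).choose (1 + k) * (k + 1) := by rw [← h2]; ring_nf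

theorem stmt5 (L S K : ℕ) (hK : 2 ≤ K) (hKS : K ≤ S) (hSL : S + 2 ≤ L) :
    betaC L S K ≤ alphaC L S K ∧ 0 ≤ betaC L S K ∧ 0 < alphaC L S K := by
  have hM : L - 1 = (L - 1) := rfl
  have hkey : (L - 1) * S.choose K ≤ S * (L - 1).choose K :=
    key_choose (L - 1) S K (by omega) hKS (by omega)
  have hkeyZ : ((L - 1 : ℕ) : ℤ) * (S.choose K : ℤ) ≤ (S : ℤ) * ((L - 1).choose K : ℤ) := by
    exact_mod_cast hkey
  have hcastM : ((L - 1 : ℕ) : ℤ) = (L : ℤ) - 1 := by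
    have : 1 ≤ L := by omega
    push_cast [Nat.cast_sub this]; ring
  rw [hcastM] at hkeyZ
  have hb : (1 : ℤ) ≤ (S.choose K : ℤ) := by
    exact_mod_cast Nat.choose_pos hKS
  have hKZ : (K : ℤ) ≤ S := by exact_mod_cast hKS
  have hLZ : (S : ℤ) + 2 ≤ L := by exact_mod_cast hSL
  have hKZ2 : (2 : ℤ) ≤ K := by exact_mod_cast hK
  unfold alphaC betaC
  refine ⟨by nlinarith, by linarith, by nlinarith⟩
end

section
/- Let L ≥ 3 be an integer, μ a real-valued function on the nonempty proper subsets of {1,…,L}, i ∈ {1,…,L}, and K an integer with 2 ≤ K ≤ L−1. Then Σ_{𝒦 : |𝒦| = K} J_i(𝒦) ≥ ((L−2)! / ((L−K−1)!·K!)) · (K·μ̲_K − (K−1)·μ̄_K), where the sum is over all subsets 𝒦 ⊂ {1,…,L} of cardinality K. Consequently, if (K−1)·μ̄_K ≤ K·μ̲_K, then Σ_{𝒦 : |𝒦| = K} J_i(𝒦) ≥ 0. -/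
open Finset

/-- `η(L,S,K) = (α + β/(K−1))·μ̲_K − α·μ̄_K`. -/
noncomputable def eta (L S K : ℕ) (μ : Finset (Fin L) → ℝ) : ℝ :=
  ((alphaC L S K : ℝ) + (betaC L S K : ℝ) / ((K : ℝ) - 1)) * muMin L μ K
    - (alphaC L S K : ℝ) * muMax L μ K

lemma E1aux (k m : ℕ) :
    (((k+m+2).choose (k+1) : ℝ)) * (((m:ℝ)+1)/((k:ℝ)+(m:ℝ)+2)) =
      ((k+m+1).factorial : ℝ) / (((m).factorial : ℝ) * (((k+2)).factorial : ℝ)) * ((k:ℝ)+2) := by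
  rw [Nat.cast_choose ℝ (by omega : k+1 ≤ k+m+2)]
  have hs : k+m+2-(k+1) = m+1 := by omega
  rw [hs]
  have h1 : ((k+m+2).factorial : ℝ) = ((k:ℝ)+(m:ℝ)+2) * ((k+m+1).factorial : ℝ) := by
    rw [show k+m+2 = (k+m+1)+1 by omega, Nat.factorial_succ]; push_cast; ring
  have h2 : ((m+1).factorial : ℝ) = ((m:ℝ)+1) * (m.factorial : ℝ) := by
    rw [Nat.factorial_succ]; push_cast; ring
  have h3 : ((k+2).factorial : ℝ) = ((k:ℝ)+2) * ((k+1).factorial : ℝ) := by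
    rw [show k+2 = (k+1)+1 by omega, Nat.factorial_succ]; push_cast; ring
  rw [h1, h2, h3]
  have p1 : ((k+1).factorial : ℝ) ≠ 0 := by positivity
  have p2 : (m.factorial : ℝ) ≠ 0 := by positivity
  have p3 : ((k:ℝ)+(m:ℝ)+2) ≠ 0 := by positivity
  have p4 : ((m:ℝ)+1) ≠ 0 := by positivity
  have p5 : ((k:ℝ)+2) ≠ 0 := by positivity
  field_simp

lemma E2aux (k m : ℕ) :
    (((k+m+2).choose (k+2) : ℝ)) * (((k:ℝ)+1)/((k:ℝ)+(m:ℝ)+2)) =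
      ((k+m+1).factorial : ℝ) / (((m).factorial : ℝ) * (((k+2)).factorial : ℝ)) * ((k:ℝ)+1) := by
  rw [Nat.cast_choose ℝ (by omega : k+2 ≤ k+m+2)]
  have hs : k+m+2-(k+2) = m := by omega
  rw [hs]
  have h1 : ((k+m+2).factorial : ℝ) = ((k:ℝ)+(m:ℝ)+2) * ((k+m+1).factorial : ℝ) := by
    rw [show k+m+2 = (k+m+1)+1 by omega, Nat.factorial_succ]; push_cast; ring
  rw [h1]
  have p1 : ((k+2).factorial : ℝ) ≠ 0 := by positivity
  have p2 : (m.factorial : ℝ) ≠ 0 := by positivity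
  have p3 : ((k:ℝ)+(m:ℝ)+2) ≠ 0 := by positivity
  field_simp

theorem stmt7 (L : ℕ) (hL : 3 ≤ L) (μ : Finset (Fin L) → ℝ) (i : Fin L)
    (K : ℕ) (hK : 2 ≤ K) (hKL : K ≤ L - 1) :
    ((Nat.factorial (L - 2) : ℝ) / ((Nat.factorial (L - K - 1) : ℝ) * (Nat.factorial K : ℝ)))
        * ((K : ℝ) * muMin L μ K - ((K : ℝ) - 1) * muMax L μ K)
      ≤ ∑ 𝒦 ∈ Finset.univ.filter (fun 𝒦 : Finset (Fin L) => 𝒦.card = K), J L μ i 𝒦 ∧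
    (((K : ℝ) - 1) * muMax L μ K ≤ (K : ℝ) * muMin L μ K →
      0 ≤ ∑ 𝒦 ∈ Finset.univ.filter (fun 𝒦 : Finset (Fin L) => 𝒦.card = K), J L μ i 𝒦) := by
  have hfin : ({x : ℝ | ∃ 𝒦 : Finset (Fin L), 𝒦.card = K ∧ μ 𝒦 = x}).Finite := by
    apply Set.Finite.subset (Set.finite_range μ)
    rintro x ⟨𝒦, -, rfl⟩; exact ⟨𝒦, rfl⟩
  have hmin : ∀ 𝒦 : Finset (Fin L), 𝒦.card = K → muMin L μ K ≤ μ 𝒦 := fun 𝒦 h =>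
    csInf_le hfin.bddBelow ⟨𝒦, h, rfl⟩
  have hmax : ∀ 𝒦 : Finset (Fin L), 𝒦.card = K → μ 𝒦 ≤ muMax L μ K := fun 𝒦 h =>
    le_csSup hfin.bddAbove ⟨𝒦, h, rfl⟩
  obtain ⟨k, hk⟩ : ∃ k, K = k + 2 := ⟨K - 2, by omega⟩
  obtain ⟨m, hm⟩ : ∃ m, L = k + m + 3 := ⟨L - k - 3, by omega⟩
  set F : Finset (Finset (Fin L)) := Finset.univ.filter (fun 𝒦 : Finset (Fin L) => 𝒦.card = K)
    with hFdef
  -- counting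
  have hFcard : F.card = L.choose K := by
    have : F = powersetCard K (univ : Finset (Fin L)) := by
      ext 𝒦; simp [hFdef, Finset.mem_powersetCard]
    rw [this, card_powersetCard, card_univ, Fintype.card_fin]
  have hF2 : F.filter (fun 𝒦 => i ∉ 𝒦) = powersetCard K ((univ : Finset (Fin L)).erase i) := by
    ext 𝒦
    simp only [hFdef, mem_filter, mem_univ, true_and, Finset.mem_powersetCard,
      Finset.subset_erase, subset_univ, true_and]
    tauto
  have hF2card : (F.filter (fun 𝒦 => i ∉ 𝒦)).card = (k+m+2).choose K := by
    rw [hF2, card_powersetCard, card_erase_of_mem (mem_univ i), card_univ, Fintype.card_fin,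
      show L - 1 = k+m+2 by omega]
  have hPascal : L.choose K = (k+m+2).choose (k+1) + (k+m+2).choose (k+2) := by
    rw [show L = (k+m+2)+1 by omega, show K = (k+1)+1 by omega, Nat.choose_succ_succ]
  have hsplit := Finset.card_filter_add_card_filter_not
    (s := F) (p := fun 𝒦 => i ∈ 𝒦)
  have hF1card : (F.filter (fun 𝒦 => i ∈ 𝒦)).card = (k+m+2).choose (k+1) := by
    have h2 : (F.filter (fun 𝒦 => ¬ i ∈ 𝒦)).card = (k+m+2).choose (k+2) := by
      rw [hF2card, hk]
    omega
  -- real coefficients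
  have hLcast : ((L : ℕ) : ℝ) = (k:ℝ)+(m:ℝ)+3 := by rw [hm]; push_cast; ring
  have hKcast : ((K : ℕ) : ℝ) = (k:ℝ)+2 := by rw [hk]; push_cast; ring
  set c1 : ℝ := ((m:ℝ)+1)/((k:ℝ)+(m:ℝ)+2) with hc1
  set c2 : ℝ := ((k:ℝ)+1)/((k:ℝ)+(m:ℝ)+2) with hc2
  have hc1nn : 0 ≤ c1 := by positivity
  have hc2nn : 0 ≤ c2 := by positivity
  -- termwise bounds
  have hb1 : ∀ 𝒦 ∈ F.filter (fun 𝒦 => i ∈ 𝒦), c1 * muMin L μ K ≤ J L μ i 𝒦 := by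
    intro 𝒦 h𝒦
    simp only [hFdef, mem_filter, mem_univ, true_and] at h𝒦
    obtain ⟨hcard, hi⟩ := h𝒦
    rw [J, if_pos hi, hcard]
    rw [show ((L:ℕ):ℝ) - ((K:ℕ):ℝ) = (m:ℝ)+1 by rw [hLcast, hKcast]; ring,
      show ((L:ℕ):ℝ) - 1 = (k:ℝ)+(m:ℝ)+2 by rw [hLcast]; ring]
    exact mul_le_mul_of_nonneg_left (hmin 𝒦 hcard) hc1nn
  have hb2 : ∀ 𝒦 ∈ F.filter (fun 𝒦 => ¬ i ∈ 𝒦), -(c2 * muMax L μ K) ≤ J L μ i 𝒦 := by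
    intro 𝒦 h𝒦
    simp only [hFdef, mem_filter, mem_univ, true_and] at h𝒦
    obtain ⟨hcard, hi⟩ := h𝒦
    rw [J, if_neg hi, hcard]
    rw [show ((K:ℕ):ℝ) - 1 = (k:ℝ)+1 by rw [hKcast]; ring,
      show ((L:ℕ):ℝ) - 1 = (k:ℝ)+(m:ℝ)+2 by rw [hLcast]; ring]
    have := mul_le_mul_of_nonneg_left (hmax 𝒦 hcard) hc2nn
    nlinarith
  -- sum bounds
  have hsum1 : ((F.filter (fun 𝒦 => i ∈ 𝒦)).card : ℝ) * (c1 * muMin L μ K)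
      ≤ ∑ 𝒦 ∈ F.filter (fun 𝒦 => i ∈ 𝒦), J L μ i 𝒦 := by
    calc ((F.filter (fun 𝒦 => i ∈ 𝒦)).card : ℝ) * (c1 * muMin L μ K)
        = ∑ _𝒦 ∈ F.filter (fun 𝒦 => i ∈ 𝒦), c1 * muMin L μ K := by
          rw [Finset.sum_const, nsmul_eq_mul]
      _ ≤ _ := Finset.sum_le_sum hb1
  have hsum2 : ((F.filter (fun 𝒦 => ¬ i ∈ 𝒦)).card : ℝ) * (-(c2 * muMax L μ K))
      ≤ ∑ 𝒦 ∈ F.filter (fun 𝒦 => ¬ i ∈ 𝒦), J L μ i 𝒦 := by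
    calc ((F.filter (fun 𝒦 => ¬ i ∈ 𝒦)).card : ℝ) * (-(c2 * muMax L μ K))
        = ∑ _𝒦 ∈ F.filter (fun 𝒦 => ¬ i ∈ 𝒦), -(c2 * muMax L μ K) := by
          rw [Finset.sum_const, nsmul_eq_mul]
      _ ≤ _ := Finset.sum_le_sum hb2
  have htotal : (((k+m+2).choose (k+1) : ℝ)) * (c1 * muMin L μ K)
      + (((k+m+2).choose (k+2) : ℝ)) * (-(c2 * muMax L μ K))
      ≤ ∑ 𝒦 ∈ F, J L μ i 𝒦 := by
    rw [← Finset.sum_filter_add_sum_filter_not F (fun 𝒦 => i ∈ 𝒦) (J L μ i)]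
    rw [← hF1card]
    rw [show (k+m+2).choose (k+2) = (F.filter (fun 𝒦 => ¬ i ∈ 𝒦)).card by rw [hF2card, hk]]
    exact add_le_add hsum1 hsum2
  -- identify the coefficient
  have hRfacts : (Nat.factorial (L - 2) : ℝ) / ((Nat.factorial (L - K - 1) : ℝ) * (Nat.factorial K : ℝ))
      = ((k+m+1).factorial : ℝ) / ((m.factorial : ℝ) * ((k+2).factorial : ℝ)) := by
    rw [show L - 2 = k + m + 1 by omega, show L - K - 1 = m by omega, hk]
  have hmain : ((Nat.factorial (L - 2) : ℝ) / ((Nat.factorial (L - K - 1) : ℝ) * (Nat.factorial K : ℝ)))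
        * ((K : ℝ) * muMin L μ K - ((K : ℝ) - 1) * muMax L μ K)
      ≤ ∑ 𝒦 ∈ F, J L μ i 𝒦 := by
    refine le_trans (le_of_eq ?_) htotal
    rw [hRfacts, hKcast]
    have e1 := E1aux k m
    have e2 := E2aux k m
    rw [hc1, hc2]
    linear_combination (-(muMin L μ K)) * e1 + muMax L μ K * e2
  refine ⟨hmain, fun h => le_trans ?_ hmain⟩
  have hfactnn : 0 ≤ (Nat.factorial (L - 2) : ℝ) / ((Nat.factorial (L - K - 1) : ℝ) * (Nat.factorial K : ℝ)) := by
    positivity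
  exact mul_nonneg hfactnn (by linarith)
end
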